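/- Key converse inequality for the two-way channel: for any (n, M1, M2) code for the additive-noise two-way channel in which the noise vector Z2^n is independent of (W1, W2, Z1^n), one has H(W1 | W2) − H(W1 | W2, Y2^n) ≤ n log q − H(Z2^n); symmetrically, if Z1^n is independent of (W1, W2, Z2^n), then H(W2 | W1) − H(W2 | W1, Y1^n) ≤ n log q − H(Z1^n). -/

import Mathlib

open MeasureTheory ProbabilityTheory Real Filter Topology
open scoped ENNReal

noncomputable section

/-- Shannon entropy (in the same base as `Real.log`) of a finitely-valued random variable. -/
def Hent {Ω S : Type*} [MeasurableSpace Ω] [Fintype S] (μ : Measure Ω) (X : Ω → S) : ℝ :=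
  ∑ s : S, Real.negMulLog ((μ (X ⁻¹' {s})).toReal)

/-- Conditional Shannon entropy H(X | Y) = H(X, Y) − H(Y). -/
def Hcond {Ω S T : Type*} [MeasurableSpace Ω] [Fintype S] [Fintype T]
    (μ : Measure Ω) (X : Ω → S) (Y : Ω → T) : ℝ :=
  Hent μ (fun ω => (X ω, Y ω)) - Hent μ Y

/-- An (n, M1, M2) code for the two-way channel. -/
structure TWCode (q n M1 M2 : ℕ) where
  f1 : Fin M1 → (i : Fin n) → (Fin i.1 → ZMod q) → ZMod q
  f2 : Fin M2 → (i : Fin n) → (Fin i.1 → ZMod q) → ZMod q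
  g1 : Fin M1 → (Fin n → ZMod q) → Fin M2
  g2 : Fin M2 → (Fin n → ZMod q) → Fin M1

/-- The pair of channel inputs (X_{1,i}, X_{2,i}) produced by the adaptive encoders,
where Y_{1,j} = X_{1,j} + X_{2,j} + Z_{1,j} and Y_{2,j} = X_{1,j} + X_{2,j} + Z_{2,j}
(addition mod q). -/
def TWX {q n M1 M2 : ℕ} (C : TWCode q n M1 M2) (w1 : Fin M1) (w2 : Fin M2)
    (z1 z2 : Fin n → ZMod q) : (i : Fin n) → ZMod q × ZMod q
  | i =>
    (C.f1 w1 i (fun j =>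
        have h : j.1 < n := j.2.trans i.2
        (TWX C w1 w2 z1 z2 ⟨j.1, h⟩).1 + (TWX C w1 w2 z1 z2 ⟨j.1, h⟩).2 + z1 ⟨j.1, h⟩),
     C.f2 w2 i (fun j =>
        have h : j.1 < n := j.2.trans i.2
        (TWX C w1 w2 z1 z2 ⟨j.1, h⟩).1 + (TWX C w1 w2 z1 z2 ⟨j.1, h⟩).2 + z2 ⟨j.1, h⟩))
  termination_by i => i.1
  decreasing_by all_goals exact j.2

/-- Output sequence Y_1^n at user 1. -/
def TWY1 {q n M1 M2 : ℕ} (C : TWCode q n M1 M2) (w1 : Fin M1) (w2 : Fin M2)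
    (z1 z2 : Fin n → ZMod q) (i : Fin n) : ZMod q :=
  (TWX C w1 w2 z1 z2 i).1 + (TWX C w1 w2 z1 z2 i).2 + z1 i

/-- Output sequence Y_2^n at user 2. -/
def TWY2 {q n M1 M2 : ℕ} (C : TWCode q n M1 M2) (w1 : Fin M1) (w2 : Fin M2)
    (z1 z2 : Fin n → ZMod q) (i : Fin n) : ZMod q :=
  (TWX C w1 w2 z1 z2 i).1 + (TWX C w1 w2 z1 z2 i).2 + z2 i

open Finset

/-!
H(W1 | W2) − H(W1 | W2, Y) equals H(Y | W2) − H(Y | W1, W2). The first term is at most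
log |Qⁿ| = n log q. The second can only drop when Z1 is added to the condition (submodularity of
entropy, which comes from Jensen's inequality for the perspective of `negMulLog`), and given
(W1, W2, Z1) the received word Y2ⁿ determines Z2ⁿ: the channel inputs at time i are functions of
the messages and of the outputs before time i, so Z_{2,i} = Y_{2,i} − X_{1,i} − X_{2,i} is
recovered step by step. Hence H(Y | W1, W2) ≥ H(Z2 | W1, W2, Z1) = H(Z2) by independence.
The second inequality is the first with the roles of the two users exchanged.
-/

namespace Real

variable {ι : Type*} [Fintype ι]

theorem sum_negMulLog_sub_negMulLog_sum {x : ι → ℝ} (hx : ∀ i, 0 ≤ x i) :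
    ∑ i, negMulLog (x i) - negMulLog (∑ i, x i) =
      ∑ i, (∑ j, x j) * negMulLog (x i / ∑ j, x j) := by
  rcases (sum_nonneg fun i _ => hx i).eq_or_lt with hX | hX
  · have hx0 : ∀ i, x i = 0 := fun i =>
      (sum_eq_zero_iff_of_nonneg fun i _ => hx i).1 hX.symm i (mem_univ i)
    simp [hx0]
  · have hsplit : ∀ i, negMulLog (x i) =
        x i / (∑ j, x j) * negMulLog (∑ j, x j) + (∑ j, x j) * negMulLog (x i / ∑ j, x j) := by
      intro i
      rw [← negMulLog_mul, mul_div_cancel₀ _ hX.ne']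
    rw [sum_congr rfl fun i _ => hsplit i, sum_add_distrib, ← sum_mul, ← sum_div,
      div_self hX.ne', one_mul, add_sub_cancel_left]

theorem sum_mul_negMulLog_div_le {w x : ι → ℝ} (hw : ∀ i, 0 ≤ w i) (hx : ∀ i, 0 ≤ x i)
    (hxw : ∀ i, w i = 0 → x i = 0) :
    ∑ i, w i * negMulLog (x i / w i) ≤ (∑ i, w i) * negMulLog ((∑ i, x i) / ∑ i, w i) := by
  rcases (sum_nonneg fun i _ => hw i).eq_or_lt with hW | hW
  · have hw0 : ∀ i, w i = 0 := fun i =>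
      (sum_eq_zero_iff_of_nonneg fun i _ => hw i).1 hW.symm i (mem_univ i)
    simp [hw0]
  · have jensen := concaveOn_negMulLog.le_map_sum (t := univ) (w := fun i => w i / ∑ j, w j)
      (p := fun i => x i / w i) (fun i _ => div_nonneg (hw i) hW.le)
      (by rw [← sum_div, div_self hW.ne']) (fun i _ => Set.mem_Ici.2 (div_nonneg (hx i) (hw i)))
    have hmean : ∑ i, w i / (∑ j, w j) * (x i / w i) = (∑ i, x i) / ∑ j, w j := by
      rw [sum_div]
      refine sum_congr rfl fun i _ => ?_
      rcases eq_or_ne (w i) 0 with h | h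
      · simp [h, hxw i h]
      · field_simp
    simp only [smul_eq_mul, hmean] at jensen
    calc ∑ i, w i * negMulLog (x i / w i)
        = (∑ j, w j) * ∑ i, w i / (∑ j, w j) * negMulLog (x i / w i) := by
          rw [mul_sum]; refine sum_congr rfl fun i _ => ?_; field_simp
      _ ≤ (∑ j, w j) * negMulLog ((∑ i, x i) / ∑ j, w j) :=
          mul_le_mul_of_nonneg_left jensen hW.le

theorem sum_negMulLog_le {x : ι → ℝ} (hx : ∀ i, 0 ≤ x i) :
    ∑ i, negMulLog (x i) ≤ negMulLog (∑ i, x i) + (∑ i, x i) * log (Fintype.card ι) := by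
  have h := sum_mul_negMulLog_div_le (w := fun _ => 1) (fun _ => zero_le_one) hx (by simp)
  simp only [one_mul, div_one, sum_const, card_univ, nsmul_eq_mul, mul_one] at h
  refine h.trans_eq ?_
  rcases eq_or_ne (Fintype.card ι : ℝ) 0 with hN | hN
  · simp [Fintype.card_eq_zero_iff.1 (by exact_mod_cast hN)]
  · rw [div_eq_mul_inv, negMulLog_mul]
    simp only [negMulLog, log_inv]
    field_simp

theorem sum_negMulLog_submodular {S T U : Type*} [Fintype S] [Fintype T] [Fintype U]
    {p : S → T → U → ℝ} (hp : ∀ s t u, 0 ≤ p s t u) :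
    ∑ s, ∑ t, ∑ u, negMulLog (p s t u) + ∑ t, negMulLog (∑ s, ∑ u, p s t u) ≤
      ∑ s, ∑ t, negMulLog (∑ u, p s t u) + ∑ t, ∑ u, negMulLog (∑ s, p s t u) := by
  have hBC : ∑ s, ∑ t, ∑ u, negMulLog (p s t u) - ∑ t, ∑ u, negMulLog (∑ s, p s t u) =
      ∑ t, ∑ s, ∑ u, (∑ s', p s' t u) * negMulLog (p s t u / ∑ s', p s' t u) := by
    rw [sum_comm]
    simp_rw [sum_comm (s := (univ : Finset S)) (t := (univ : Finset U))]
    rw [← sum_sub_distrib]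
    refine sum_congr rfl fun t _ => ?_
    rw [← sum_sub_distrib]
    exact sum_congr rfl fun u _ => sum_negMulLog_sub_negMulLog_sum fun s => hp s t u
  have hB : ∑ s, ∑ t, negMulLog (∑ u, p s t u) - ∑ t, negMulLog (∑ s, ∑ u, p s t u) =
      ∑ t, ∑ s, (∑ s', ∑ u, p s' t u) * negMulLog ((∑ u, p s t u) / ∑ s', ∑ u, p s' t u) := by
    rw [sum_comm, ← sum_sub_distrib]
    exact sum_congr rfl fun t _ =>
      sum_negMulLog_sub_negMulLog_sum fun s => sum_nonneg fun u _ => hp s t u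
  have hfiber : ∀ s t, ∑ u, (∑ s', p s' t u) * negMulLog (p s t u / ∑ s', p s' t u) ≤
      (∑ s', ∑ u, p s' t u) * negMulLog ((∑ u, p s t u) / ∑ s', ∑ u, p s' t u) := by
    intro s t
    rw [sum_comm (s := (univ : Finset S))]
    refine sum_mul_negMulLog_div_le (fun u => sum_nonneg fun s' _ => hp s' t u)
      (fun u => hp s t u) fun u hu => le_antisymm ?_ (hp s t u)
    exact hu ▸ single_le_sum (fun s' _ => hp s' t u) (mem_univ s)
  have := sum_le_sum fun t (_ : t ∈ univ) => sum_le_sum fun s (_ : s ∈ univ) => hfiber s t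
  linarith

end Real

section Entropy

variable {Ω S T U : Type*} [MeasurableSpace Ω] {μ : Measure Ω}
  [Fintype S] [Fintype T] [Fintype U]

theorem Hent_comp_of_injective (X : Ω → S) {φ : S → T} (hφ : Function.Injective φ) :
    Hent μ (fun ω => φ (X ω)) = Hent μ X := by
  refine (Fintype.sum_of_injective φ hφ _ _ (fun t ht => ?_) fun s => ?_).symm
  · have : (fun ω => φ (X ω)) ⁻¹' {t} = ∅ :=
      Set.eq_empty_of_forall_notMem fun ω hω => ht ⟨X ω, hω⟩
    simp [this]
  · have : (fun ω => φ (X ω)) ⁻¹' {φ s} = X ⁻¹' {s} := by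
      ext ω
      simp [hφ.eq_iff]
    rw [this]

theorem Hent_pair_eq_sum (X : Ω → S) (Y : Ω → T) :
    Hent μ (fun ω => (X ω, Y ω)) = ∑ s, ∑ t, negMulLog (μ.real (X ⁻¹' {s} ∩ Y ⁻¹' {t})) := by
  simp only [Hent, Fintype.sum_prod_type, ← Set.singleton_prod_singleton, Set.mk_preimage_prod]
  rfl

variable [MeasurableSpace S] [MeasurableSingletonClass S]

theorem sum_measureReal_preimage_inter {X : Ω → S} (hX : Measurable X) (E : Set Ω)
    [IsFiniteMeasure μ] :
    ∑ s, μ.real (X ⁻¹' {s} ∩ E) = μ.real E := by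
  simp only [← measureReal_restrict_apply (hX (measurableSet_singleton _))]
  rw [sum_measureReal_preimage_singleton _ fun s _ => hX (measurableSet_singleton s)]
  simp

variable [IsProbabilityMeasure μ]

theorem sum_measureReal_preimage {X : Ω → S} (hX : Measurable X) :
    ∑ s, μ.real (X ⁻¹' {s}) = 1 := by
  simpa using sum_measureReal_preimage_inter (μ := μ) hX Set.univ

theorem Hent_pair_le_add_log_card [MeasurableSpace T] [MeasurableSingletonClass T]
    {X : Ω → S} {Y : Ω → T} (hX : Measurable X) (hY : Measurable Y) :
    Hent μ (fun ω => (X ω, Y ω)) ≤ Hent μ X + log (Fintype.card T) := by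
  calc Hent μ (fun ω => (X ω, Y ω))
      ≤ ∑ s, (negMulLog (μ.real (X ⁻¹' {s})) + μ.real (X ⁻¹' {s}) * log (Fintype.card T)) := by
        rw [Hent_pair_eq_sum]
        refine sum_le_sum fun s _ => ?_
        have := sum_negMulLog_le fun t => measureReal_nonneg (μ := μ) (s := X ⁻¹' {s} ∩ Y ⁻¹' {t})
        simp_rw [Set.inter_comm (X ⁻¹' {s}), sum_measureReal_preimage_inter hY] at this
        simpa only [Set.inter_comm (X ⁻¹' {s})] using this
    _ = Hent μ X + log (Fintype.card T) := by
        rw [sum_add_distrib, ← sum_mul, sum_measureReal_preimage hX, one_mul, Hent]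
        rfl

theorem Hent_pair_of_indepFun [MeasurableSpace T] [MeasurableSingletonClass T]
    {X : Ω → S} {Y : Ω → T} (hX : Measurable X) (hY : Measurable Y) (h : IndepFun X Y μ) :
    Hent μ (fun ω => (X ω, Y ω)) = Hent μ X + Hent μ Y := by
  have hmul : ∀ s t, μ.real (X ⁻¹' {s} ∩ Y ⁻¹' {t}) = μ.real (X ⁻¹' {s}) * μ.real (Y ⁻¹' {t}) :=
    fun s t => by
      simp only [measureReal_def, h.measure_inter_preimage_eq_mul _ _ (measurableSet_singleton s)
        (measurableSet_singleton t), ENNReal.toReal_mul]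
  simp only [Hent_pair_eq_sum, hmul, negMulLog_mul, sum_add_distrib, ← sum_mul, ← mul_sum,
    sum_measureReal_preimage hX, sum_measureReal_preimage hY, one_mul]
  rfl

theorem Hent_submodular [MeasurableSpace U] [MeasurableSingletonClass U]
    {A : Ω → S} {B : Ω → T} {C : Ω → U} (hA : Measurable A) (hC : Measurable C) :
    Hent μ (fun ω => (A ω, B ω, C ω)) + Hent μ B ≤
      Hent μ (fun ω => (A ω, B ω)) + Hent μ (fun ω => (B ω, C ω)) := by
  set p : S → T → U → ℝ := fun s t u => μ.real (A ⁻¹' {s} ∩ B ⁻¹' {t} ∩ C ⁻¹' {u})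
  have hAB : ∀ s t, ∑ u, p s t u = μ.real (A ⁻¹' {s} ∩ B ⁻¹' {t}) := fun s t => by
    simp only [p, Set.inter_comm _ (C ⁻¹' _)]
    exact sum_measureReal_preimage_inter hC _
  have hBC : ∀ t u, ∑ s, p s t u = μ.real (B ⁻¹' {t} ∩ C ⁻¹' {u}) := fun t u => by
    simp only [p, Set.inter_assoc]
    exact sum_measureReal_preimage_inter hA _
  have hABC : Hent μ (fun ω => (A ω, B ω, C ω)) = ∑ s, ∑ t, ∑ u, negMulLog (p s t u) := by
    simp only [Hent_pair_eq_sum, Fintype.sum_prod_type, ← Set.singleton_prod_singleton,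
      Set.mk_preimage_prod, p, Set.inter_assoc]
  have := sum_negMulLog_submodular (p := p) fun s t u => measureReal_nonneg
  simp only [hAB, hBC, sum_measureReal_preimage_inter hA] at this
  rw [hABC, Hent_pair_eq_sum, Hent_pair_eq_sum, Hent]
  exact this

end Entropy

section Channel

variable {q n M1 M2 : ℕ} (C : TWCode q n M1 M2) (w1 : Fin M1) (w2 : Fin M2)

theorem TWX_apply (z1 z2 : Fin n → ZMod q) (i : Fin n) :
    TWX C w1 w2 z1 z2 i =
      (C.f1 w1 i fun j => TWY1 C w1 w2 z1 z2 (Fin.castLE i.2.le j),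
        C.f2 w2 i fun j => TWY2 C w1 w2 z1 z2 (Fin.castLE i.2.le j)) := by
  rw [TWX]
  rfl

variable {C w1 w2} in
theorem TWX_eq_of_outputs {z1 z2 z1' z2' : Fin n → ZMod q}
    (h : ∀ i, TWX C w1 w2 z1 z2 i = TWX C w1 w2 z1' z2' i →
      TWY1 C w1 w2 z1 z2 i = TWY1 C w1 w2 z1' z2' i ∧
        TWY2 C w1 w2 z1 z2 i = TWY2 C w1 w2 z1' z2' i) :
    TWX C w1 w2 z1 z2 = TWX C w1 w2 z1' z2' := by
  suffices ∀ k (hk : k < n), TWX C w1 w2 z1 z2 ⟨k, hk⟩ = TWX C w1 w2 z1' z2' ⟨k, hk⟩ from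
    funext fun i => this i.1 i.2
  intro k
  induction k using Nat.strong_induction_on with
  | _ k ih =>
    intro hk
    have hpast := fun j : Fin k => h (Fin.castLE hk.le j) (ih j j.2 (j.2.trans hk))
    rw [TWX_apply, TWX_apply, funext fun j => (hpast j).1, funext fun j => (hpast j).2]

theorem TWY1_injective (z2 : Fin n → ZMod q) :
    Function.Injective fun z1 => TWY1 C w1 w2 z1 z2 := by
  intro z1 z1' hY
  have hX : TWX C w1 w2 z1 z2 = TWX C w1 w2 z1' z2 :=
    TWX_eq_of_outputs fun i hXi => ⟨congrFun hY i, by simp only [TWY2, hXi]⟩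
  funext i
  simpa [TWY1, hX] using congrFun hY i

theorem TWY2_injective (z1 : Fin n → ZMod q) : Function.Injective (TWY2 C w1 w2 z1) := by
  intro z2 z2' hY
  have hX : TWX C w1 w2 z1 z2 = TWX C w1 w2 z1 z2' :=
    TWX_eq_of_outputs fun i hXi => ⟨by simp only [TWY1, hXi], congrFun hY i⟩
  funext i
  simpa [TWY2, hX] using congrFun hY i

end Channel

theorem Hcond_sub_Hcond_le_log_card_sub_Hent {Ω A B C D E : Type*} [MeasurableSpace Ω]
    {μ : Measure Ω} [IsProbabilityMeasure μ]
    [Fintype A] [MeasurableSpace A] [MeasurableSingletonClass A]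
    [Fintype B] [MeasurableSpace B] [MeasurableSingletonClass B]
    [Fintype C] [MeasurableSpace C] [MeasurableSingletonClass C]
    [Fintype D] [MeasurableSpace D] [MeasurableSingletonClass D]
    [Fintype E] [MeasurableSpace E] [MeasurableSingletonClass E]
    {Φ : A → B → C → D → E} (hΦ : ∀ a b c, Function.Injective (Φ a b c))
    {W1 : Ω → A} {W2 : Ω → B} {Z1 : Ω → C} {Z2 : Ω → D}
    (hW1 : Measurable W1) (hW2 : Measurable W2) (hZ1 : Measurable Z1) (hZ2 : Measurable Z2)
    (hInd : IndepFun (fun ω => (W1 ω, W2 ω, Z1 ω)) Z2 μ) :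
    Hcond μ W1 W2 - Hcond μ W1 (fun ω => (W2 ω, Φ (W1 ω) (W2 ω) (Z1 ω) (Z2 ω))) ≤
      log (Fintype.card E) - Hent μ Z2 := by
  set Y := fun ω => Φ (W1 ω) (W2 ω) (Z1 ω) (Z2 ω)
  have hY : Measurable Y :=
    (measurable_of_countable fun x : A × B × C × D => Φ x.1 x.2.1 x.2.2.1 x.2.2.2).comp
      (hW1.prodMk (hW2.prodMk (hZ1.prodMk hZ2)))
  have hcard := Hent_pair_le_add_log_card (μ := μ) hW2 hY
  have hsub := Hent_submodular (μ := μ) (B := fun ω => (W1 ω, W2 ω)) hY hZ1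
  have hφ : Function.Injective fun x : (A × B × C) × D =>
      (Φ x.1.1 x.1.2.1 x.1.2.2 x.2, (x.1.1, x.1.2.1), x.1.2.2) := by
    rintro ⟨⟨a, b, c⟩, d⟩ ⟨⟨a', b', c'⟩, d'⟩ h
    simp only [Prod.mk.injEq] at h
    obtain ⟨hd, ⟨rfl, rfl⟩, rfl⟩ := h
    rw [hΦ a b c hd]
  -- given `(W1, W2, Z1)`, the output `Y` determines `Z2`
  have hnoise : Hent μ (fun ω => (Y ω, (W1 ω, W2 ω), Z1 ω)) =
      Hent μ (fun ω => (W1 ω, W2 ω, Z1 ω)) + Hent μ Z2 := by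
    rw [← Hent_pair_of_indepFun (hW1.prodMk (hW2.prodMk hZ1)) hZ2 hInd]
    exact (Hent_comp_of_injective (fun ω => ((W1 ω, W2 ω, Z1 ω), Z2 ω)) hφ :)
  have hassoc : Hent μ (fun ω => ((W1 ω, W2 ω), Z1 ω)) = Hent μ (fun ω => (W1 ω, W2 ω, Z1 ω)) :=
    (Hent_comp_of_injective (fun ω => ((W1 ω, W2 ω), Z1 ω)) (Equiv.prodAssoc A B C).injective).symm
  have hreorder : Hent μ (fun ω => (W1 ω, W2 ω, Y ω)) = Hent μ (fun ω => (Y ω, W1 ω, W2 ω)) :=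
    Hent_comp_of_injective (φ := fun x : E × A × B => (x.2.1, x.2.2, x.1))
      (fun ω => (Y ω, W1 ω, W2 ω)) fun x y h => by simp_all [Prod.ext_iff]
  unfold Hcond
  linarith

theorem twc_key_converse_inequality_general {Ω : Type*} [MeasurableSpace Ω] (μ : Measure Ω)
    [IsProbabilityMeasure μ] (q : ℕ) [NeZero q]
    (n M1 M2 : ℕ) (C : TWCode q n M1 M2)
    (W1 : Ω → Fin M1) (W2 : Ω → Fin M2) (Z1 Z2 : Ω → Fin n → ZMod q)
    (hW1 : Measurable W1) (hW2 : Measurable W2)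
    (hZ1 : Measurable Z1) (hZ2 : Measurable Z2) :
    (IndepFun (fun ω => (W1 ω, W2 ω, Z1 ω)) Z2 μ →
      Hcond μ W1 W2 -
        Hcond μ W1 (fun ω => (W2 ω, TWY2 C (W1 ω) (W2 ω) (Z1 ω) (Z2 ω))) ≤
        n * Real.log q - Hent μ Z2) ∧
    (IndepFun (fun ω => (W1 ω, W2 ω, Z2 ω)) Z1 μ →
      Hcond μ W2 W1 -
        Hcond μ W2 (fun ω => (W1 ω, TWY1 C (W1 ω) (W2 ω) (Z1 ω) (Z2 ω))) ≤
        n * Real.log q - Hent μ Z1) := by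
  have hcard : log (Fintype.card (Fin n → ZMod q)) = n * log q := by
    simp [ZMod.card, Real.log_pow]
  rw [← hcard]
  refine ⟨fun hInd => Hcond_sub_Hcond_le_log_card_sub_Hent (TWY2_injective C) hW1 hW2 hZ1 hZ2 hInd,
    fun hInd => ?_⟩
  have hInd' : IndepFun (fun ω => (W2 ω, W1 ω, Z2 ω)) Z1 μ :=
    hInd.comp (measurable_of_countable fun x => (x.2.1, x.1, x.2.2)) measurable_id
  exact Hcond_sub_Hcond_le_log_card_sub_Hent (Φ := fun w2 w1 z2 z1 => TWY1 C w1 w2 z1 z2)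
    (fun w2 w1 z2 => TWY1_injective C w1 w2 z2) hW2 hW1 hZ2 hZ1 hInd'

/-- **Key converse inequality for the two-way channel**: for any (n, M1, M2) code for the
additive-noise two-way channel, if the noise vector Z2^n is independent of (W1, W2, Z1^n),
then H(W1 | W2) − H(W1 | W2, Y2^n) ≤ n log q − H(Z2^n); symmetrically, if Z1^n is
independent of (W1, W2, Z2^n), then H(W2 | W1) − H(W2 | W1, Y1^n) ≤ n log q − H(Z1^n). -/
theorem twc_key_converse_inequality {Ω : Type*} [MeasurableSpace Ω] (μ : Measure Ω)
    [IsProbabilityMeasure μ] (q : ℕ) [NeZero q] (hq : 2 ≤ q)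
    (n M1 M2 : ℕ) (C : TWCode q n M1 M2)
    (W1 : Ω → Fin M1) (W2 : Ω → Fin M2) (Z1 Z2 : Ω → Fin n → ZMod q)
    (hW1 : Measurable W1) (hW2 : Measurable W2)
    (hZ1 : Measurable Z1) (hZ2 : Measurable Z2) :
    (IndepFun (fun ω => (W1 ω, W2 ω, Z1 ω)) Z2 μ →
      Hcond μ W1 W2 -
        Hcond μ W1 (fun ω => (W2 ω, TWY2 C (W1 ω) (W2 ω) (Z1 ω) (Z2 ω))) ≤
        n * Real.log q - Hent μ Z2) ∧
    (IndepFun (fun ω => (W1 ω, W2 ω, Z2 ω)) Z1 μ →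
      Hcond μ W2 W1 -
        Hcond μ W2 (fun ω => (W1 ω, TWY1 C (W1 ω) (W2 ω) (Z1 ω) (Z2 ω))) ≤
        n * Real.log q - Hent μ Z1) :=
  twc_key_converse_inequality_general μ q n M1 M2 C W1 W2 Z1 Z2 hW1 hW2 hZ1 hZ2

end
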